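/- Let L be a set-graded Leibniz superalgebra of maximal length with support S and distinguished element o, and suppose L_o = Σ_{a,b ∈ S∖{o}, a⋆b={o}} [L_a,L_b]. Then L_o^0 = Σ_{a∈S^0, b∈S_{¬𝔍}^0, a⋆b={o}} [L_a^0,L_b^0] + Σ_{a∈S^1, b∈S_{¬𝔍}^1, a⋆b={o}} [L_a^1,L_b^1] and L_o^1 = Σ_{a∈S^1, b∈S_{¬𝔍}^0, a⋆b={o}} [L_a^1,L_b^0] + Σ_{a∈S^0, b∈S_{¬𝔍}^1, a⋆b={o}} [L_a^0,L_b^1]. -/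
import Mathlib


/-- The submodule spanned by all brackets `br x y` with `x ∈ P`, `y ∈ Q`.
This encodes the product `[P,Q]` of subspaces. -/
def brMod {K L : Type*} [Field K] [AddCommGroup L] [Module K L]
    (br : L →ₗ[K] L →ₗ[K] L) (P Q : Submodule K L) : Submodule K L :=
  Submodule.span K {z : L | ∃ x ∈ P, ∃ y ∈ Q, z = br x y}

/-- A Leibniz superalgebra over a field `K`: a `Z_2`-graded algebra `L = L⁰ ⊕ L¹`
with a bilinear bracket satisfying `[Lⁱ,Lʲ] ⊆ L^{i+j}` and the super Leibniz identity. -/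
structure LeibnizSuper (K L : Type*) [Field K] [AddCommGroup L] [Module K L] where
  br : L →ₗ[K] L →ₗ[K] L
  sup : ZMod 2 → Submodule K L
  internal : DirectSum.IsInternal sup
  grade : ∀ i j : ZMod 2, ∀ x ∈ sup i, ∀ y ∈ sup j, br x y ∈ sup (i + j)
  super_leibniz : ∀ (i j k : ZMod 2), ∀ x ∈ sup i, ∀ y ∈ sup j, ∀ z ∈ sup k,
    br x (br y z) = br (br x y) z - ((-1 : K) ^ (j.val * k.val)) • br (br x z) y

namespace LeibnizSuper

variable {K L : Type*} [Field K] [AddCommGroup L] [Module K L] (A : LeibnizSuper K L)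

/-- A graded ideal of `L`: a `Z_2`-graded subspace `J` with `[J,L] + [L,J] ⊆ J`. -/
def IsGradedIdeal (J : Submodule K L) : Prop :=
  J = (J ⊓ A.sup 0) ⊔ (J ⊓ A.sup 1) ∧ brMod A.br J ⊤ ≤ J ∧ brMod A.br ⊤ J ≤ J

/-- The set `{[x,y] + (−1)^{ij}[y,x] : x ∈ Lⁱ, y ∈ Lʲ}`. -/
def lieSet : Set L :=
  {z : L | ∃ (i j : ZMod 2) (x y : L), x ∈ A.sup i ∧ y ∈ A.sup j ∧
    z = A.br x y + ((-1 : K) ^ (i.val * j.val)) • A.br y x}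

/-- `𝔍`: the graded ideal of `L` generated by `lieSet`. -/
def Jfrak : Submodule K L := sInf {J : Submodule K L | A.IsGradedIdeal J ∧ A.lieSet ⊆ J}

/-- `L` is simple if `[L,L] ≠ 0` and its only graded ideals are `0`, `𝔍` and `L`. -/
def Simple : Prop :=
  brMod A.br ⊤ ⊤ ≠ ⊥ ∧ ∀ J : Submodule K L, A.IsGradedIdeal J → J = ⊥ ∨ J = A.Jfrak ∨ J = ⊤

end LeibnizSuper

/-- A set grading of a Leibniz superalgebra by a set `Γ`. -/
structure SetGrading {K L : Type*} [Field K] [AddCommGroup L] [Module K L]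
    (A : LeibnizSuper K L) (Γ : Type*) [DecidableEq Γ] where
  comp : Γ → Submodule K L
  internal : DirectSum.IsInternal comp
  graded_comp : ∀ a : Γ, comp a = (comp a ⊓ A.sup 0) ⊔ (comp a ⊓ A.sup 1)
  mul_comp : ∀ a b : Γ, brMod A.br (comp a) (comp b) = ⊥ ∨
    (brMod A.br (comp a) (comp b) ≠ ⊥ ∧ ∃! c : Γ, brMod A.br (comp a) (comp b) ≤ comp c)

/-- `{o}` as a subset of `Γ` (empty if `o = ∅`, i.e. `o = none`). -/
def oSet {Γ : Type*} (o : Option Γ) : Set Γ := {x : Γ | o = some x}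

namespace SetGrading

variable {K L : Type*} [Field K] [AddCommGroup L] [Module K L]
  {A : LeibnizSuper K L} {Γ : Type*} [DecidableEq Γ] (G : SetGrading A Γ)

/-- The support `S := {a ∈ Γ : L_a ≠ 0}`. -/
def supp : Set Γ := {a : Γ | G.comp a ≠ ⊥}

/-- `L_a^i := L_a ∩ L^i`. -/
def compSup (a : Γ) (i : ZMod 2) : Submodule K L := G.comp a ⊓ A.sup i

/-- `S^i := {a ∈ Γ : L_a^i ≠ 0}`. -/
def suppi (i : ZMod 2) : Set Γ := {a : Γ | G.compSup a i ≠ ⊥}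

/-- The operation `⋆` on `S ∪ S~`, where `Sum.inl a` plays the role of `a ∈ S`
and `Sum.inr a` plays the role of the symbol `ã`. -/
def starOp : Γ ⊕ Γ → Γ ⊕ Γ → Set Γ
  | Sum.inl a, Sum.inl b =>
      {c : Γ | brMod A.br (G.comp a) (G.comp b) ≠ ⊥ ∧ brMod A.br (G.comp a) (G.comp b) ≤ G.comp c}
  | Sum.inl a, Sum.inr b =>
      {c : Γ | brMod A.br (G.comp c) (G.comp b) ≠ ⊥ ∧ brMod A.br (G.comp c) (G.comp b) ≤ G.comp a}
  | Sum.inr a, Sum.inl b =>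
      {c : Γ | brMod A.br (G.comp c) (G.comp a) ≠ ⊥ ∧ brMod A.br (G.comp c) (G.comp a) ≤ G.comp b}
  | Sum.inr _, Sum.inr _ => ∅

/-- `L_o`, which is `{0}` when `o = ∅`. -/
def Lo (o : Option Γ) : Submodule K L := o.elim ⊥ fun x => G.comp x

/-- `o` is a distinguished element: either `o = ∅`, or `o ∈ S` with `o ⋆ a ≠ {o}`
for every `a ∈ S∖{o}`. -/
def IsDistinguished (o : Option Γ) : Prop :=
  ∀ x : Γ, o = some x → x ∈ G.supp ∧
    ∀ a ∈ G.supp, a ≠ x → G.starOp (Sum.inl x) (Sum.inl a) ≠ {x}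

/-- The map `φ`. -/
def phi (o : Option Γ) (U : Set (Γ ⊕ Γ)) (r : Γ ⊕ Γ) : Set (Γ ⊕ Γ) :=
  Sum.inl '' ((⋃ x ∈ U, G.starOp x r) \ oSet o) ∪
    Sum.inr '' ((⋃ x ∈ U, G.starOp x r) \ oSet o)

/-- Iterated application of `φ` along a list. -/
def phiIter (o : Option Γ) : Set (Γ ⊕ Γ) → List (Γ ⊕ Γ) → Set (Γ ⊕ Γ)
  | init, [] => init
  | init, r :: rs => phiIter o (G.phi o init r) rs

/-- `a` is connected to `b`. -/
def Connected (o : Option Γ) (a b : Γ) : Prop :=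
  a = b ∨ ∃ (r₁ : Γ ⊕ Γ) (rs : List (Γ ⊕ Γ)),
    rs ≠ [] ∧ (r₁ = Sum.inl a ∨ r₁ = Sum.inr a) ∧
    (∀ r ∈ r₁ :: rs, Sum.elim (· ∈ G.supp) (· ∈ G.supp) r) ∧
    (∀ k < rs.length, (G.phiIter o {r₁} (rs.take k)).Nonempty) ∧
    Sum.inl b ∈ G.phiIter o {r₁} rs

/-- The equivalence class `[a] := {b ∈ S∖{o} : b is connected to a}`. -/
def cls (o : Option Γ) (a : Γ) : Set Γ :=
  {b : Γ | b ∈ G.supp \ oSet o ∧ G.Connected o b a}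

/-- `V_{[a]} := ⊕_{b ∈ [a]} L_b`. -/
def Vcls (o : Option Γ) (a : Γ) : Submodule K L := ⨆ b ∈ G.cls o a, G.comp b

/-- `L_{[a],o} := span{[L_b,L_c] : b,c ∈ [a]} ∩ L_o`. -/
def clsO (o : Option Γ) (a : Γ) : Submodule K L :=
  (⨆ b ∈ G.cls o a, ⨆ c ∈ G.cls o a, brMod A.br (G.comp b) (G.comp c)) ⊓ G.Lo o

/-- `L_{[a]} := L_{[a],o} ⊕ V_{[a]}`. -/
def Lcls (o : Option Γ) (a : Γ) : Submodule K L := G.clsO o a ⊔ G.Vcls o a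

/-- The condition `b ⋆ c = {o}`. -/
def starToO (o : Option Γ) (b c : Γ) : Prop :=
  ∃ x : Γ, o = some x ∧ G.starOp (Sum.inl b) (Sum.inl c) = {x}

/-- `Σ_{b,c ∈ S∖{o}, b⋆c={o}} [L_b,L_c]`. -/
def oSum (o : Option Γ) : Submodule K L :=
  ⨆ b ∈ G.supp \ oSet o, ⨆ c ∈ G.supp \ oSet o, ⨆ _ : G.starToO o b c,
    brMod A.br (G.comp b) (G.comp c)

/-- `L_{S,o} := (Σ_{b,c ∈ S∖{o}, b⋆c={o}} [L_b,L_c]) ∩ L_o`. -/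
def LSo (o : Option Γ) : Submodule K L := G.oSum o ⊓ G.Lo o

/-- `L` is of maximal length: `dim L_a^i ∈ {0,1}` for `a ∈ S∖{o}`, `i ∈ Z_2`. -/
def MaximalLength (o : Option Γ) : Prop :=
  ∀ a ∈ G.supp \ oSet o, ∀ i : ZMod 2, Module.rank K ↥(G.compSup a i) ≤ 1

/-- `S_𝔍^i := {a ∈ S∖{o} : 0 ≠ L_a^i ⊆ 𝔍}`. -/
def sJ (o : Option Γ) (i : ZMod 2) : Set Γ :=
  {a : Γ | a ∈ G.supp \ oSet o ∧ G.compSup a i ≠ ⊥ ∧ G.compSup a i ≤ A.Jfrak}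

/-- `S_{¬𝔍}^i := {a ∈ S∖{o} : L_a^i ≠ 0 and 𝔍 ∩ L_a^i = 0}`. -/
def sNJ (o : Option Γ) (i : ZMod 2) : Set Γ :=
  {a : Γ | a ∈ G.supp \ oSet o ∧ G.compSup a i ≠ ⊥ ∧ A.Jfrak ⊓ G.compSup a i = ⊥}

/-- `S_𝔍 := S_𝔍^0 ∪ S_𝔍^1`. -/
def sJset (o : Option Γ) : Set Γ := G.sJ o 0 ∪ G.sJ o 1

/-- `S_{¬𝔍} := S_{¬𝔍}^0 ∪ S_{¬𝔍}^1`. -/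
def sNJset (o : Option Γ) : Set Γ := G.sNJ o 0 ∪ G.sNJ o 1

/-- Iterated `φ` starting from `{a}` along elements `r 1, r 2, …` of `Γ`. -/
def phiIterN (o : Option Γ) (a : Γ) (r : ℕ → Γ) : ℕ → Set (Γ ⊕ Γ)
  | 0 => {Sum.inl a}
  | k + 1 => G.phi o (phiIterN o a r k) (Sum.inl (r (k + 1)))

/-- `a ∈ S_Y^i` is `¬𝔍`-connected to `b ∈ S_Y^j` (`Y` is the family `S_Y^i`, `i ∈ Z_2`). -/
def NJConnected (o : Option Γ) (Y : ZMod 2 → Set Γ) (a : Γ) (i : ZMod 2) (b : Γ) (j : ZMod 2) :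
    Prop :=
  a = b ∨ ∃ (m : ℕ) (r : ℕ → Γ) (d : ℕ → ZMod 2),
    1 ≤ m ∧ (∀ k, 1 ≤ k → k ≤ m → r k ∈ G.sNJ o (d k)) ∧
    (∀ k, 1 ≤ k → k ≤ m → (G.phiIterN o a r k).Nonempty ∧
      G.phiIterN o a r k ⊆
        Sum.inl '' Y (i + ∑ l ∈ Finset.Icc 1 k, d l) ∪
          Sum.inr '' Y (i + ∑ l ∈ Finset.Icc 1 k, d l)) ∧
    Sum.inl b ∈ G.phiIterN o a r m ∧ i + ∑ l ∈ Finset.Icc 1 m, d l = j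

/-- `S_Y` has all of its elements `¬𝔍`-connected. -/
def allNJConnected (o : Option Γ) (Y : ZMod 2 → Set Γ) : Prop :=
  ∀ (i j : ZMod 2), ∀ a ∈ Y i, ∀ b ∈ Y j, G.NJConnected o Y a i b j

/-- `S`-multiplicativity of a set-graded Leibniz superalgebra of maximal length. -/
def SMultiplicative (o : Option Γ) : Prop :=
  (∀ (i j k : ZMod 2) (a b r : Γ), a ∈ G.sNJ o i → b ∈ G.sNJ o j → G.compSup r k ≠ ⊥ →
    (a ∈ G.starOp (Sum.inl b) (Sum.inl r) ∨ a ∈ G.starOp (Sum.inl b) (Sum.inr r)) →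
    G.compSup a i ≤ brMod A.br (G.compSup b j) (G.compSup r k)) ∧
  (∀ (i j k : ZMod 2) (c d r : Γ), c ∈ G.sJ o i → d ∈ G.sJ o j → r ∈ G.sNJ o k →
    (c ∈ G.starOp (Sum.inl d) (Sum.inl r) ∨ c ∈ G.starOp (Sum.inl d) (Sum.inr r)) →
    G.compSup c i ≤ brMod A.br (G.compSup d j) (G.compSup r k))

/-- The Lie-annihilator `Z_Lie(L) := {x ∈ L : [x,L_a] + [L_a,x] = 0 for every a ∉ S_𝔍}`. -/
def ZLie (o : Option Γ) : Set L :=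
  {x : L | ∀ a : Γ, a ∉ G.sJset o → ∀ y ∈ G.comp a, A.br x y = 0 ∧ A.br y x = 0}

end SetGrading


namespace LeibnizSuper
variable {K L : Type*} [Field K] [AddCommGroup L] [Module K L] (A : LeibnizSuper K L)


-- AUX
lemma sup_top : A.sup 0 ⊔ A.sup 1 = ⊤ := by
  have h := A.internal.submodule_iSup_eq_top
  rw [← h]
  refine le_antisymm (sup_le (le_iSup _ 0) (le_iSup _ 1)) (iSup_le fun i => ?_)
  have : i = 0 ∨ i = 1 := by revert i; decide
  rcases this with h | h <;> rw [h]
  · exact le_sup_left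
  · exact le_sup_right

def ann : Submodule K L where
  carrier := {z | ∀ x, A.br x z = 0}
  add_mem' := fun ha hb x => by rw [map_add, ha x, hb x, add_zero]
  zero_mem' := fun x => map_zero _
  smul_mem' := fun c z hz x => by rw [map_smul, hz x, smul_zero]

lemma mem_ann_of_homog {z : L} (h : ∀ i : ZMod 2, ∀ x ∈ A.sup i, A.br x z = 0) :
    z ∈ A.ann := by
  intro x
  have hx : x ∈ A.sup 0 ⊔ A.sup 1 := by rw [A.sup_top]; trivial
  obtain ⟨a, ha, b, hb, rfl⟩ := Submodule.mem_sup.1 hx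
  rw [map_add, LinearMap.add_apply, h 0 a ha, h 1 b hb, add_zero]

lemma base_mem_ann {i j : ZMod 2} {x y : L} (hx : x ∈ A.sup i) (hy : y ∈ A.sup j) :
    A.br x y + ((-1 : K) ^ (i.val * j.val)) • A.br y x ∈ A.ann := by
  apply A.mem_ann_of_homog
  intro l w hw
  have h1 := A.super_leibniz l i j w hw x hx y hy
  have h2 := A.super_leibniz l j i w hw y hy x hx
  rw [map_add, map_smul, h1, h2, Nat.mul_comm j.val i.val]
  set c : K := (-1 : K) ^ (i.val * j.val) with hc
  have hcc : c * c = 1 := by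
    rw [hc, ← pow_add]
    exact Even.neg_one_pow ⟨i.val * j.val, rfl⟩
  rw [smul_sub, smul_smul, hcc, one_smul]
  abel

end LeibnizSuper

inductive LeibnizSuper.TT {K L : Type*} [Field K] [AddCommGroup L] [Module K L]
    (A : LeibnizSuper K L) : ZMod 2 → L → Prop
  | base (i j : ZMod 2) (x y : L) (hx : x ∈ A.sup i) (hy : y ∈ A.sup j) :
      LeibnizSuper.TT A (i + j) (A.br x y + ((-1 : K) ^ (i.val * j.val)) • A.br y x)
  | mul (d j : ZMod 2) (z y : L) (hz : LeibnizSuper.TT A d z) (hy : y ∈ A.sup j) :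
      LeibnizSuper.TT A (d + j) (A.br z y)

namespace LeibnizSuper

variable {K L : Type*} [Field K] [AddCommGroup L] [Module K L] (A : LeibnizSuper K L)

lemma TT_sup {d : ZMod 2} {t : L} (h : A.TT d t) : t ∈ A.sup d := by
  induction h with
  | base i j x y hx hy =>
      refine add_mem (A.grade i j x hx y hy) (Submodule.smul_mem _ _ ?_)
      have := A.grade j i y hy x hx
      rwa [add_comm j i] at this
  | mul d j z y hz hy ih => exact A.grade d j z ih y hy

lemma TT_ann {d : ZMod 2} {t : L} (h : A.TT d t) : t ∈ A.ann := by
  induction h with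
  | base i j x y hx hy => exact A.base_mem_ann hx hy
  | mul d j z y hz hy ih =>
      apply A.mem_ann_of_homog
      intro l w hw
      have hsl := A.super_leibniz l d j w hw z (A.TT_sup hz) y hy
      rw [hsl, ih w, ih (A.br w y), map_zero, LinearMap.zero_apply, smul_zero, sub_zero]

def Jset : Submodule K L := Submodule.span K {t | ∃ d, A.TT d t}

lemma Jset_le_ann : A.Jset ≤ A.ann := by
  rw [Jset, Submodule.span_le]
  rintro t ⟨d, h⟩
  exact A.TT_ann h

lemma lieSet_subset_Jset : A.lieSet ⊆ A.Jset := by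
  rintro z ⟨i, j, x, y, hx, hy, rfl⟩
  exact Submodule.subset_span ⟨i + j, TT.base i j x y hx hy⟩

lemma Jset_graded_ideal : A.IsGradedIdeal A.Jset := by
  refine ⟨?_, ?_, ?_⟩
  · refine le_antisymm ?_ (sup_le inf_le_left inf_le_left)
    rw [Jset, Submodule.span_le]
    rintro t ⟨d, h⟩
    have ht : t ∈ A.Jset := Submodule.subset_span ⟨d, h⟩
    have hts : t ∈ A.sup d := A.TT_sup h
    have hd : ∀ e : ZMod 2, e = 0 ∨ e = 1 := by decide
    rcases hd d with h0 | h0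
    · exact Submodule.mem_sup_left ⟨ht, h0 ▸ hts⟩
    · exact Submodule.mem_sup_right ⟨ht, h0 ▸ hts⟩
  · rw [brMod, Submodule.span_le]
    rintro z ⟨p, hp, q, -, rfl⟩
    induction hp using Submodule.span_induction with
    | mem t htm =>
        obtain ⟨d, htd⟩ := htm
        have hq : q ∈ A.sup 0 ⊔ A.sup 1 := by rw [A.sup_top]; trivial
        obtain ⟨a, ha, b, hb, rfl⟩ := Submodule.mem_sup.1 hq
        rw [map_add]
        exact add_mem (Submodule.subset_span ⟨d + 0, TT.mul d 0 t a htd ha⟩)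
          (Submodule.subset_span ⟨d + 1, TT.mul d 1 t b htd hb⟩)
    | zero => rw [map_zero, LinearMap.zero_apply]; exact zero_mem _
    | add x y hx hy ihx ihy => rw [map_add, LinearMap.add_apply]; exact add_mem ihx ihy
    | smul a x hx ihx => rw [map_smul, LinearMap.smul_apply]; exact Submodule.smul_mem _ _ ihx
  · rw [brMod, Submodule.span_le]
    rintro z ⟨x, -, y, hy, rfl⟩
    rw [A.Jset_le_ann hy x]
    exact zero_mem _

lemma Jfrak_le_ann : A.Jfrak ≤ A.ann :=
  le_trans (sInf_le ⟨A.Jset_graded_ideal, A.lieSet_subset_Jset⟩) A.Jset_le_ann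

end LeibnizSuper

section BrModLemmas

variable {K L : Type*} [Field K] [AddCommGroup L] [Module K L]

lemma brMod_mono {br : L →ₗ[K] L →ₗ[K] L} {P P' Q Q' : Submodule K L}
    (h1 : P ≤ P') (h2 : Q ≤ Q') : brMod br P Q ≤ brMod br P' Q' := by
  apply Submodule.span_mono
  rintro z ⟨x, hx, y, hy, rfl⟩
  exact ⟨x, h1 hx, y, h2 hy, rfl⟩

lemma brMod_le_sup (A : LeibnizSuper K L) {P Q : Submodule K L} {i j : ZMod 2}
    (hP : P ≤ A.sup i) (hQ : Q ≤ A.sup j) : brMod A.br P Q ≤ A.sup (i + j) := by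
  rw [brMod, Submodule.span_le]
  rintro z ⟨x, hx, y, hy, rfl⟩
  exact A.grade i j x (hP hx) y (hQ hy)

lemma brMod_eq_bot_of_right_ann (A : LeibnizSuper K L) {P Q : Submodule K L}
    (hQ : Q ≤ A.ann) : brMod A.br P Q = ⊥ := by
  rw [eq_bot_iff, brMod, Submodule.span_le]
  rintro z ⟨x, hx, y, hy, rfl⟩
  simp [hQ hy x]

lemma brMod_bot_left {br : L →ₗ[K] L →ₗ[K] L} {Q : Submodule K L} :
    brMod br ⊥ Q = ⊥ := by
  rw [eq_bot_iff, brMod, Submodule.span_le]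
  rintro z ⟨x, hx, y, hy, rfl⟩
  simp only [Submodule.mem_bot] at hx
  simp [hx]

lemma brMod_bot_right {br : L →ₗ[K] L →ₗ[K] L} {P : Submodule K L} :
    brMod br P ⊥ = ⊥ := by
  rw [eq_bot_iff, brMod, Submodule.span_le]
  rintro z ⟨x, hx, y, hy, rfl⟩
  simp only [Submodule.mem_bot] at hy
  simp [hy]

lemma brMod_sup_left {br : L →ₗ[K] L →ₗ[K] L} {P₁ P₂ Q : Submodule K L} :
    brMod br (P₁ ⊔ P₂) Q ≤ brMod br P₁ Q ⊔ brMod br P₂ Q := by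
  rw [brMod, Submodule.span_le]
  rintro z ⟨x, hx, y, hy, rfl⟩
  obtain ⟨a, ha, b, hb, rfl⟩ := Submodule.mem_sup.1 hx
  rw [map_add, LinearMap.add_apply]
  exact add_mem (Submodule.mem_sup_left (Submodule.subset_span ⟨a, ha, y, hy, rfl⟩))
    (Submodule.mem_sup_right (Submodule.subset_span ⟨b, hb, y, hy, rfl⟩))

lemma brMod_sup_right {br : L →ₗ[K] L →ₗ[K] L} {P Q₁ Q₂ : Submodule K L} :
    brMod br P (Q₁ ⊔ Q₂) ≤ brMod br P Q₁ ⊔ brMod br P Q₂ := by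
  rw [brMod, Submodule.span_le]
  rintro z ⟨x, hx, y, hy, rfl⟩
  obtain ⟨a, ha, b, hb, rfl⟩ := Submodule.mem_sup.1 hy
  rw [map_add]
  exact add_mem (Submodule.mem_sup_left (Submodule.subset_span ⟨x, hx, a, ha, rfl⟩))
    (Submodule.mem_sup_right (Submodule.subset_span ⟨x, hx, b, hb, rfl⟩))

lemma le_span_singleton_of_rank_le_one {P : Submodule K L}
    (h : Module.rank K ↥P ≤ 1) {z : L} (hz : z ∈ P) (h0 : z ≠ 0) :
    P ≤ Submodule.span K {z} := by
  obtain ⟨v, hv⟩ := rank_le_one_iff.1 h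
  obtain ⟨r, hr⟩ := hv ⟨z, hz⟩
  have hr0 : r ≠ 0 := by
    rintro rfl
    apply h0
    have := congrArg Subtype.val hr
    simpa using this.symm
  intro w hw
  obtain ⟨s, hs⟩ := hv ⟨w, hw⟩
  have hsv : w = s • (v : L) := by
    have := congrArg Subtype.val hs
    simpa using this.symm
  have hzv : z = r • (v : L) := by
    have := congrArg Subtype.val hr
    simpa using this.symm
  have : w = (s * r⁻¹) • z := by
    rw [hzv, hsv, smul_smul, mul_assoc, inv_mul_cancel₀ hr0, mul_one]
  rw [this]
  exact Submodule.smul_mem _ _ (Submodule.mem_span_singleton_self z)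

end BrModLemmas

namespace LeibnizSuper
variable {K L : Type*} [Field K] [AddCommGroup L] [Module K L] (A : LeibnizSuper K L)

lemma sup01_disjoint : A.sup 1 ⊓ A.sup 0 = ⊥ := by
  have h := A.internal.submodule_iSupIndep 1
  have h0 : A.sup 0 ≤ ⨆ j, ⨆ _ : j ≠ 1, A.sup j :=
    le_iSup₂_of_le 0 (by decide) le_rfl
  exact disjoint_iff.1 (h.mono_right h0)

end LeibnizSuper

namespace SetGrading

variable {K L : Type*} [Field K] [AddCommGroup L] [Module K L]
  {A : LeibnizSuper K L} {Γ : Type*} [DecidableEq Γ] (G : SetGrading A Γ)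

/-- The summand `Σ_{a ∈ S^i, b ∈ S_{¬𝔍}^j, a⋆b={o}} [L_a^i, L_b^j]`. -/
def T2 (o : Option Γ) (i j : ZMod 2) : Submodule K L :=
  ⨆ a ∈ G.suppi i, ⨆ b ∈ G.sNJ o j, ⨆ _ : G.starToO o a b,
    brMod A.br (G.compSup a i) (G.compSup b j)

lemma T2_le_sup (o : Option Γ) (i j : ZMod 2) : G.T2 o i j ≤ A.sup (i + j) := by
  refine iSup₂_le fun a _ => iSup₂_le fun b _ => iSup_le fun _ => ?_
  exact brMod_le_sup A inf_le_right inf_le_right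

lemma T2_le_oSum (o : Option Γ) (ho : G.IsDistinguished o) (i j : ZMod 2) :
    G.T2 o i j ≤ G.oSum o := by
  refine iSup₂_le fun a ha => iSup₂_le fun b hb => iSup_le fun hst => ?_
  have hasupp : a ∈ G.supp := by
    intro hbot
    exact ha (by simp [SetGrading.compSup, hbot])
  have hanoto : a ∉ oSet o := by
    intro hoa
    obtain ⟨x, hox, hstar⟩ := hst
    have hoa' : o = some a := hoa
    have hxa : x = a := Option.some_inj.mp (hox ▸ hoa')
    obtain ⟨-, hP⟩ := ho x hox
    have hbsupp : b ∈ G.supp := hb.1.1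
    have hbx : b ≠ x := by
      intro h
      exact hb.1.2 (show o = some b from h ▸ hox)
    exact hP b hbsupp hbx (hxa ▸ hstar)
  refine le_trans (brMod_mono inf_le_left inf_le_left) ?_
  exact le_iSup₂_of_le a ⟨hasupp, hanoto⟩
    (le_iSup₂_of_le b hb.1 (le_iSup_of_le hst le_rfl))

lemma piece_le (o : Option Γ) (hml : G.MaximalLength o) {b c : Γ}
    (hc : c ∈ G.supp \ oSet o) (hst : G.starToO o b c) (i j : ZMod 2) :
    brMod A.br (G.compSup b i) (G.compSup c j) ≤ G.T2 o i j := by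
  by_cases h1 : G.compSup b i = ⊥
  · rw [h1, brMod_bot_left]; exact bot_le
  by_cases h2 : G.compSup c j = ⊥
  · rw [h2, brMod_bot_right]; exact bot_le
  by_cases h3 : c ∈ G.sNJ o j
  · exact le_iSup₂_of_le b h1 (le_iSup₂_of_le c h3 (le_iSup_of_le hst le_rfl))
  · have hann : G.compSup c j ≤ A.ann := by
      have hJne : ¬ (A.Jfrak ⊓ G.compSup c j = ⊥) := fun h => h3 ⟨hc, h2, h⟩
      obtain ⟨z, hzm, hz0⟩ := (Submodule.ne_bot_iff _).1 hJne
      obtain ⟨hzJ, hzc⟩ := Submodule.mem_inf.1 hzm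
      refine le_trans (le_span_singleton_of_rank_le_one (hml c hc j) hzc hz0) ?_
      refine le_trans ?_ A.Jfrak_le_ann
      rw [Submodule.span_le, Set.singleton_subset_iff]
      exact hzJ
    rw [brMod_eq_bot_of_right_ann A hann]
    exact bot_le

lemma oSum_le (o : Option Γ) (hml : G.MaximalLength o) :
    G.oSum o ≤ (G.T2 o 0 0 ⊔ G.T2 o 1 1) ⊔ (G.T2 o 1 0 ⊔ G.T2 o 0 1) := by
  refine iSup₂_le fun b hb => iSup₂_le fun c hc => iSup_le fun hst => ?_
  have hdb : G.comp b = G.compSup b 0 ⊔ G.compSup b 1 := G.graded_comp b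
  have hdc : G.comp c = G.compSup c 0 ⊔ G.compSup c 1 := G.graded_comp c
  rw [hdb, hdc]
  refine le_trans brMod_sup_left (sup_le ?_ ?_) <;>
    refine le_trans brMod_sup_right (sup_le ?_ ?_)
  · exact le_trans (G.piece_le o hml hc hst 0 0) (le_sup_of_le_left le_sup_left)
  · exact le_trans (G.piece_le o hml hc hst 0 1) (le_sup_of_le_right le_sup_right)
  · exact le_trans (G.piece_le o hml hc hst 1 0) (le_sup_of_le_right le_sup_left)
  · exact le_trans (G.piece_le o hml hc hst 1 1) (le_sup_of_le_left le_sup_right)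

lemma grade_zero (o : Option Γ) (ho : G.IsDistinguished o) (hml : G.MaximalLength o)
    (hLo : G.Lo o = G.oSum o) :
    G.Lo o ⊓ A.sup 0 = G.T2 o 0 0 ⊔ G.T2 o 1 1 := by
  rw [hLo]
  have hU : G.T2 o 0 0 ⊔ G.T2 o 1 1 ≤ A.sup 0 := by
    refine sup_le ?_ ?_
    · have := G.T2_le_sup o 0 0; rwa [show (0 + 0 : ZMod 2) = 0 from by decide] at this
    · have := G.T2_le_sup o 1 1; rwa [show (1 + 1 : ZMod 2) = 0 from by decide] at this
  have hV : G.T2 o 1 0 ⊔ G.T2 o 0 1 ≤ A.sup 1 := by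
    refine sup_le ?_ ?_
    · have := G.T2_le_sup o 1 0; rwa [show (1 + 0 : ZMod 2) = 1 from by decide] at this
    · have := G.T2_le_sup o 0 1; rwa [show (0 + 1 : ZMod 2) = 1 from by decide] at this
  refine le_antisymm ?_
    (le_inf (sup_le (G.T2_le_oSum o ho 0 0) (G.T2_le_oSum o ho 1 1)) hU)
  refine le_trans (inf_le_inf_right _ (G.oSum_le o hml)) ?_
  rw [sup_inf_assoc_of_le _ hU]
  refine sup_le le_rfl ?_
  exact le_trans (le_trans (inf_le_inf_right _ hV) (le_of_eq A.sup01_disjoint)) bot_le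

lemma grade_one (o : Option Γ) (ho : G.IsDistinguished o) (hml : G.MaximalLength o)
    (hLo : G.Lo o = G.oSum o) :
    G.Lo o ⊓ A.sup 1 = G.T2 o 1 0 ⊔ G.T2 o 0 1 := by
  rw [hLo]
  have hU : G.T2 o 1 0 ⊔ G.T2 o 0 1 ≤ A.sup 1 := by
    refine sup_le ?_ ?_
    · have := G.T2_le_sup o 1 0; rwa [show (1 + 0 : ZMod 2) = 1 from by decide] at this
    · have := G.T2_le_sup o 0 1; rwa [show (0 + 1 : ZMod 2) = 1 from by decide] at this
  have hV : G.T2 o 0 0 ⊔ G.T2 o 1 1 ≤ A.sup 0 := by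
    refine sup_le ?_ ?_
    · have := G.T2_le_sup o 0 0; rwa [show (0 + 0 : ZMod 2) = 0 from by decide] at this
    · have := G.T2_le_sup o 1 1; rwa [show (1 + 1 : ZMod 2) = 0 from by decide] at this
  refine le_antisymm ?_
    (le_inf (sup_le (G.T2_le_oSum o ho 1 0) (G.T2_le_oSum o ho 0 1)) hU)
  have hle : G.oSum o ≤ (G.T2 o 1 0 ⊔ G.T2 o 0 1) ⊔ (G.T2 o 0 0 ⊔ G.T2 o 1 1) := by
    rw [sup_comm]
    exact G.oSum_le o hml
  refine le_trans (inf_le_inf_right _ hle) ?_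
  rw [sup_inf_assoc_of_le _ hU]
  refine sup_le le_rfl ?_
  have hdisj : A.sup 0 ⊓ A.sup 1 = ⊥ := by rw [inf_comm]; exact A.sup01_disjoint
  exact le_trans (le_trans (inf_le_inf_right _ hV) (le_of_eq hdisj)) bot_le

end SetGrading

/-- if `L_o = Σ_{a,b ∈ S∖{o}, a⋆b={o}} [L_a,L_b]` then `L_o^0` and
`L_o^1` decompose as in Remark 3.1 (Equation (16)) of the paper. -/
theorem stmt12 {K L : Type*} [Field K] [AddCommGroup L] [Module K L]
    {Γ : Type*} [DecidableEq Γ] [Nonempty Γ]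
    (A : LeibnizSuper K L) (G : SetGrading A Γ)
    (o : Option Γ) (ho : G.IsDistinguished o)
    (hml : G.MaximalLength o)
    (hLo : G.Lo o = G.oSum o) :
    G.Lo o ⊓ A.sup 0 =
      (⨆ a ∈ G.suppi 0, ⨆ b ∈ G.sNJ o 0, ⨆ _ : G.starToO o a b,
        brMod A.br (G.compSup a 0) (G.compSup b 0)) ⊔
      (⨆ a ∈ G.suppi 1, ⨆ b ∈ G.sNJ o 1, ⨆ _ : G.starToO o a b,
        brMod A.br (G.compSup a 1) (G.compSup b 1)) ∧
    G.Lo o ⊓ A.sup 1 =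
      (⨆ a ∈ G.suppi 1, ⨆ b ∈ G.sNJ o 0, ⨆ _ : G.starToO o a b,
        brMod A.br (G.compSup a 1) (G.compSup b 0)) ⊔
      (⨆ a ∈ G.suppi 0, ⨆ b ∈ G.sNJ o 1, ⨆ _ : G.starToO o a b,
        brMod A.br (G.compSup a 0) (G.compSup b 1)) := by
  exact ⟨G.grade_zero o ho hml hLo, G.grade_one o ho hml hLo⟩
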